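/- For any left-invariant total order ≺ on the Baumslag–Solitar group BS(1,−m) = ⟨a, b | a b a⁻¹ = b⁻ᵐ⟩ with m > 0, every element of the subgroup ⟨b⟩ is less than max_≺{a, a⁻¹}. -/

import Mathlib

/-- The single relator `a b a⁻¹ bᵐ` of the Baumslag–Solitar group
`BS(1,-m) = ⟨a, b ∣ a b a⁻¹ = b⁻ᵐ⟩`, with `a = FreeGroup.of 0` and `b = FreeGroup.of 1`. -/
def bsRels (m : ℕ) : Set (FreeGroup (Fin 2)) :=
  {FreeGroup.of 0 * FreeGroup.of 1 * (FreeGroup.of 0)⁻¹ * (FreeGroup.of 1) ^ m}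

/-- The Baumslag–Solitar group `BS(1,-m) = ⟨a, b ∣ a b a⁻¹ = b⁻ᵐ⟩`. -/
abbrev BSGroup (m : ℕ) : Type := PresentedGroup (bsRels m)

/-- The generator `a` of `BS(1,-m)`. -/
def BSa (m : ℕ) : BSGroup m := PresentedGroup.of 0

/-- The generator `b` of `BS(1,-m)`. -/
def BSb (m : ℕ) : BSGroup m := PresentedGroup.of 1

section Aux

variable {G : Type*} [Group G] {r : G → G → Prop}
  (hr : IsStrictTotalOrder G r)
  (hinv : ∀ g x y : G, r x y → r (g * x) (g * y))

include hr hinv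

private lemma aux_pos_of_inv_lt (x : G) (h : r x⁻¹ x) : r 1 x := by
  rcases (haveI := hr; trichotomous_of r x 1) with h1 | h1 | h1
  · have h2 : r 1 (x * x) := by
      have := hinv x x⁻¹ x h
      rwa [mul_inv_cancel] at this
    have h3 : r (x * x) x := by
      have := hinv x x 1 h1
      rwa [mul_one] at this
    exact hr.trans _ _ _ h2 h3
  · subst h1; rw [inv_one] at h; exact absurd h (hr.irrefl 1)
  · exact h1

private lemma aux_pow_pos (c : G) (hc : r 1 c) : ∀ k : ℕ, r 1 (c ^ (k + 1)) := by
  intro k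
  induction k with
  | zero => simpa using hc
  | succ k ih =>
    have h2 : r (c ^ (k + 1)) (c ^ (k + 1) * c) := by
      have := hinv (c ^ (k + 1)) 1 c hc
      rwa [mul_one] at this
    rw [← pow_succ] at h2
    exact hr.trans _ _ _ ih h2

private lemma aux_le_pow (c : G) (hc : r 1 c) (m : ℕ) (hm : 0 < m) :
    r c (c ^ m) ∨ c = c ^ m := by
  obtain ⟨k, rfl⟩ := Nat.exists_eq_add_of_lt hm
  rw [zero_add]
  cases k with
  | zero => right; rw [pow_one]
  | succ k =>
    left
    have := hinv c 1 (c ^ (k + 1)) (aux_pow_pos hr hinv c hc k)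
    rwa [mul_one, ← pow_succ'] at this

/-- Case `1 ≺ a`, using the relation `a c a⁻¹ = c⁻ᵐ`. -/
private lemma aux_caseA (a c : G) (m : ℕ) (hm : 0 < m)
    (hrel : a * c * a⁻¹ = (c ^ m)⁻¹) (ha : r 1 a) : r c a := by
  rcases (haveI := hr; trichotomous_of r c 1) with h1 | h1 | h1
  · exact hr.trans _ _ _ h1 ha
  · subst h1; exact ha
  · -- main case : 1 ≺ c
    by_contra hca
    have key : a * c = (c ^ m)⁻¹ * a := by rw [← hrel]; group
    -- a ≼ c ≼ c^m
    have hac : r a (c ^ m) ∨ a = c ^ m := by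
      rcases (haveI := hr; trichotomous_of r a c) with h2 | h2 | h2
      · rcases aux_le_pow hr hinv c h1 m hm with h3 | h3
        · exact Or.inl (hr.trans _ _ _ h2 h3)
        · exact Or.inl (h3 ▸ h2)
      · subst h2; exact aux_le_pow hr hinv a h1 m hm
      · exact absurd h2 hca
    -- hence a * c ≼ 1
    have hac1 : r (a * c) 1 ∨ a * c = 1 := by
      rcases hac with h2 | h2
      · left
        have := hinv (c ^ m)⁻¹ a (c ^ m) h2
        rwa [inv_mul_cancel, ← key] at this
      · right; rw [key, ← h2, inv_mul_cancel]
    -- but 1 ≺ a ≺ a * c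
    have h1ac : r 1 (a * c) := by
      have := hinv a 1 c h1
      rw [mul_one] at this
      exact hr.trans _ _ _ ha this
    rcases hac1 with h2 | h2
    · exact hr.irrefl _ (hr.trans _ _ _ h1ac h2)
    · rw [h2] at h1ac; exact hr.irrefl _ h1ac

/-- Case `1 ≺ a`, using the relation `a⁻¹ c a = c⁻ᵐ`. -/
private lemma aux_caseB (a c : G) (m : ℕ) (hm : 0 < m)
    (hrel : a⁻¹ * c * a = (c ^ m)⁻¹) (ha : r 1 a) : r c a := by
  rcases (haveI := hr; trichotomous_of r c 1) with h1 | h1 | h1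
  · exact hr.trans _ _ _ h1 ha
  · subst h1; exact ha
  · by_contra hca
    have key : c⁻¹ * a = a * c ^ m := by
      have h2 : a⁻¹ * c⁻¹ * a = c ^ m := by
        rw [← inv_inv (c ^ m), ← hrel]; group
      rw [← h2]; group
    have h1acm : r 1 (a * c ^ m) := by
      have hcm : r 1 (c ^ m) := by
        obtain ⟨k, rfl⟩ := Nat.exists_eq_add_of_lt hm
        rw [zero_add]; exact aux_pow_pos hr hinv c h1 k
      have := hinv a 1 (c ^ m) hcm
      rw [mul_one] at this
      exact hr.trans _ _ _ ha this
    rcases (haveI := hr; trichotomous_of r a c) with h2 | h2 | h2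
    · have := hinv c⁻¹ a c h2
      rw [inv_mul_cancel, key] at this
      exact hr.irrefl _ (hr.trans _ _ _ h1acm this)
    · have : a * c ^ m = 1 := by rw [← key, h2, inv_mul_cancel]
      rw [this] at h1acm
      exact hr.irrefl _ h1acm
    · exact absurd h2 hca

end Aux

/-- For any left-invariant total order `≺` on `BS(1,-m) = ⟨a, b ∣ a b a⁻¹ = b⁻ᵐ⟩` with
`m > 0`, every element of the subgroup `⟨b⟩` is less than `max_≺ {a, a⁻¹}`. -/
theorem bs_zpowers_b_lt_max (m : ℕ) (hm : 0 < m)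
    (r : BSGroup m → BSGroup m → Prop) (hr : IsStrictTotalOrder (BSGroup m) r)
    (hinv : ∀ g x y : BSGroup m, r x y → r (g * x) (g * y)) :
    ∀ g ∈ Subgroup.zpowers (BSb m),
      (r (BSa m)⁻¹ (BSa m) → r g (BSa m)) ∧ (r (BSa m) (BSa m)⁻¹ → r g (BSa m)⁻¹) := by
  set a := BSa m with ha_def
  set b := BSb m with hb_def
  -- the defining relation
  have hrel0 : a * b * a⁻¹ * b ^ m = 1 := by
    have h : (PresentedGroup.mk (bsRels m))
        (FreeGroup.of 0 * FreeGroup.of 1 * (FreeGroup.of 0)⁻¹ * (FreeGroup.of 1) ^ m) = 1 := by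
      apply (QuotientGroup.eq_one_iff _).mpr
      exact Subgroup.subset_normalClosure rfl
    simpa [ha_def, hb_def, BSa, BSb, PresentedGroup.of, map_mul, map_inv, map_pow] using h
  have hrel1 : a * b * a⁻¹ = (b ^ m)⁻¹ := eq_inv_of_mul_eq_one_left hrel0
  -- conjugation of powers of b
  have hconj : ∀ n : ℤ, a * b ^ n * a⁻¹ = ((b ^ n) ^ m)⁻¹ := by
    intro n
    have h1 : a * b ^ n * a⁻¹ = (a * b * a⁻¹) ^ n := (conj_zpow).symm
    rw [h1, hrel1]
    rw [← zpow_natCast b m, ← zpow_neg, ← zpow_mul, ← zpow_natCast (b ^ n) m,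
      ← zpow_mul, ← zpow_neg]
    ring_nf
  intro g hg
  obtain ⟨n, rfl⟩ := Subgroup.mem_zpowers_iff.mp hg
  constructor
  · intro h
    have ha1 : r 1 a := aux_pos_of_inv_lt hr hinv a h
    exact aux_caseA hr hinv a (b ^ n) m hm (hconj n) ha1
  · intro h
    have ha1 : r 1 a⁻¹ := aux_pos_of_inv_lt hr hinv a⁻¹ (by rwa [inv_inv])
    refine aux_caseB hr hinv a⁻¹ (b ^ n) m hm ?_ ha1
    rw [inv_inv]
    exact hconj n
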